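/- Let X = ℤ and let H = H^e ∪ H^o be the class from the block construction (H^e uses blocks A_d together with negative evens, H^o uses blocks A_d together with negative odds). Then the Littlestone dimension of H equals 2. In particular H is online learnable but, since C(H) = ∞, not uniformly generatable. -/

import Mathlib

open Set

variable {X : Type*}

/-- The set of distinct examples seen in the first `t` steps of the stream `x`. -/
def seenSet (x : ℕ → X) (t : ℕ) : Set X := x '' {i | i < t}

/-- The finite prefix `x₁, ..., x_t` of the stream, as a list. -/
def prefList (x : ℕ → X) (t : ℕ) : List X := List.ofFn (fun i : Fin t => x i)

/-- The version space of `H` induced by the positive examples `S`. -/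
def versionSpace (H : Set (Set X)) (S : Set X) : Set (Set X) := {h | h ∈ H ∧ S ⊆ h}

/-- The closure `⟨S⟩_H`: common positive examples of all consistent hypotheses. -/
def hclosure (H : Set (Set X)) (S : Set X) : Set X := ⋂₀ versionSpace H S

/-- There exist `d` distinct examples with nonempty version space and finite closure. -/
def FinClosureWitness (H : Set (Set X)) (d : ℕ) : Prop :=
  ∃ S : Finset X, S.card = d ∧ (versionSpace H ↑S).Nonempty ∧ (hclosure H ↑S).Finite

/-- The Closure dimension of `H` is infinite. -/
def ClosureDimInf (H : Set (Set X)) : Prop := ∀ n : ℕ, ∃ d, n ≤ d ∧ FinClosureWitness H d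

/-- The Closure dimension of `H` is at most `d`. -/
def ClosureDimLE (H : Set (Set X)) (d : ℕ) : Prop := ∀ d', d < d' → ¬ FinClosureWitness H d'

/-- Uniformly Unbounded Support property. -/
def UUS (H : Set (Set X)) : Prop := ∀ h ∈ H, h.Infinite

/-- The generator `G` outputs an unseen positive example of `h` at step `s`. -/
def GenOK (G : List X → X) (h : Set X) (x : ℕ → X) (s : ℕ) : Prop :=
  G (prefList x s) ∈ h \ seenSet x s

def UniformlyGeneratable (H : Set (Set X)) : Prop :=
  ∃ G : List X → X, ∃ d : ℕ, ∀ h ∈ H, ∀ x : ℕ → X, (∀ i, x i ∈ h) →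
    ∀ t, (seenSet x t).ncard = d → ∀ s, t ≤ s → GenOK G h x s

def NonUniformlyGeneratable (H : Set (Set X)) : Prop :=
  ∃ G : List X → X, ∀ h ∈ H, ∃ d : ℕ, ∀ x : ℕ → X, (∀ i, x i ∈ h) →
    ∀ t, (seenSet x t).ncard = d → ∀ s, t ≤ s → GenOK G h x s

/-- `x` is an enumeration of the support `h`. -/
def IsEnum (h : Set X) (x : ℕ → X) : Prop := (∀ i, x i ∈ h) ∧ ∀ y ∈ h, ∃ i, x i = y

def GeneratableInLimit (H : Set (Set X)) : Prop :=
  ∃ G : List X → X, ∀ h ∈ H, ∀ x : ℕ → X, IsEnum h x →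
    ∃ t, ∀ s, t ≤ s → GenOK G h x s

/-- The block `A_d = {d(d-1)/2 + 1, ..., d(d-1)/2 + d}` as a subset of `ℤ`. -/
def Ablock (d : ℕ) : Set ℤ :=
  {x : ℤ | (d : ℤ) * ((d : ℤ) - 1) / 2 + 1 ≤ x ∧ x ≤ (d : ℤ) * ((d : ℤ) - 1) / 2 + (d : ℤ)}

/-- The negative even integers. -/
def Eneg : Set ℤ := {x : ℤ | x < 0 ∧ Even x}

/-- The negative odd integers. -/
def Oneg : Set ℤ := {x : ℤ | x < 0 ∧ Odd x}

/-- `H^e = {x ↦ 1[x ∈ A_d ∪ E] : d ∈ ℕ}`. -/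
def He : Set (Set ℤ) := {h | ∃ d : ℕ, 1 ≤ d ∧ h = Ablock d ∪ Eneg}

/-- `H^o = {x ↦ 1[x ∈ A_d ∪ O] : d ∈ ℕ}`. -/
def Ho : Set (Set ℤ) := {h | ∃ d : ℕ, 1 ≤ d ∧ h = Ablock d ∪ Oneg}

/-- `H = H^e ∪ H^o`. -/
def Hblocks : Set (Set ℤ) := He ∪ Ho

/-- `H` shatters the finite set `S` (VC-style shattering). -/
def Shatters {X : Type*} (H : Set (Set X)) (S : Finset X) : Prop :=
  ∀ T ⊆ S, ∃ h ∈ H, ∀ x ∈ S, (x ∈ h ↔ x ∈ T)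

/-- There is a Littlestone tree of depth `d` shattered by `H`: nodes are labeled
by examples (indexed by the path of bits leading to them), and every
root-to-leaf path is realized by some hypothesis in `H`. -/
def LShattered {X : Type*} (H : Set (Set X)) (d : ℕ) : Prop :=
  ∃ t : List Bool → X, ∀ σ : ℕ → Bool, ∃ h ∈ H, ∀ i : ℕ, i < d →
    ((t (List.ofFn fun j : Fin i => σ j)) ∈ h ↔ σ i = true)

/-! Every hypothesis of `Hblocks` is a block `A_d` of positive integers together with one of the
two parity classes of negative integers. Blocks and parity classes are pairwise disjoint, so two
hypotheses that share two points separated by a third hypothesis must coincide. In a Littlestone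
tree of depth 3 the root and its right child are separated along the path 1 0, yet the paths 1 1 1
and 1 1 0 need two distinct hypotheses containing both. On the other hand `A_d ∪ E` and `A_d ∪ O` meet exactly in `A_d`, so `A_d` is its own
closure: the closure dimension is infinite, and a generator that has seen all of a finite closure
has no safe example left to output. -/

open Function

section LittlestoneTrees

variable {X : Type*} {H K : Set (Set X)} {d : ℕ}

theorem LShattered.mono (h : LShattered H d) (hHK : H ⊆ K) : LShattered K d :=
  let ⟨t, ht⟩ := h
  ⟨t, fun σ => let ⟨h, hH, hσ⟩ := ht σ; ⟨h, hHK hH, hσ⟩⟩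

theorem lShattered_two_of_forall_bool {a b : X}
    (hab : ∀ p q : Bool, ∃ h ∈ H, (a ∈ h ↔ p = true) ∧ (b ∈ h ↔ q = true)) :
    LShattered H 2 := by
  refine ⟨fun l => if l = [] then a else b, fun σ => ?_⟩
  obtain ⟨h, hH, ha, hb⟩ := hab (σ 0) (σ 1)
  refine ⟨h, hH, fun i hi => ?_⟩
  interval_cases i <;> simpa

theorem not_lShattered_three_of_subsingleton
    (hH : ∀ u v, (∃ h ∈ H, u ∈ h ∧ v ∉ h) → {h ∈ H | u ∈ h ∧ v ∈ h}.Subsingleton) :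
    ¬ LShattered H 3 := by
  rintro ⟨t, ht⟩
  obtain ⟨h₁, hH₁, p₁⟩ := ht fun n => decide (n = 0)
  obtain ⟨h₂, hH₂, p₂⟩ := ht fun _ => true
  obtain ⟨h₃, hH₃, p₃⟩ := ht fun n => decide (n < 2)
  have hsep : ∃ h ∈ H, t [] ∈ h ∧ t [true] ∉ h :=
    ⟨h₁, hH₁, by simpa using p₁ 0 (by norm_num), by simpa using p₁ 1 (by norm_num)⟩
  have h₂₃ : h₂ = h₃ := hH _ _ hsep
    ⟨hH₂, by simpa using p₂ 0 (by norm_num), by simpa using p₂ 1 (by norm_num)⟩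
    ⟨hH₃, by simpa using p₃ 0 (by norm_num), by simpa using p₃ 1 (by norm_num)⟩
  have hw₂ : t [true, true] ∈ h₂ := by simpa using p₂ 2 (by norm_num)
  have hw₃ : t [true, true] ∉ h₃ := by simpa using p₃ 2 (by norm_num)
  exact hw₃ (h₂₃ ▸ hw₂)

end LittlestoneTrees

section DisjointUnions

variable {α ι κ : Type*} {f : ι → Set α} {g : κ → Set α} {u v : α}

theorem eq_of_mem_of_pairwise_disjoint (hf : Pairwise (Disjoint on f)) {i i' : ι}
    (h : u ∈ f i) (h' : u ∈ f i') : i = i' :=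
  by_contra fun hne => Set.disjoint_left.mp (hf hne) h h'

theorem union_eq_union_of_mem_left (hf : Pairwise (Disjoint on f))
    (hg : Pairwise (Disjoint on g)) (hfg : ∀ i j, Disjoint (f i) (g j))
    {i₀ i i' : ι} {j j' : κ}
    (hu₀ : u ∈ f i₀) (hv₀ : v ∉ f i₀) (hu : u ∈ f i ∪ g j) (hv : v ∈ f i ∪ g j)
    (hu' : u ∈ f i' ∪ g j') (hv' : v ∈ f i' ∪ g j') : f i ∪ g j = f i' ∪ g j' := by
  have index_eq {i j} (h : u ∈ f i ∪ g j) : i = i₀ :=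
    h.elim (eq_of_mem_of_pairwise_disjoint hf · hu₀)
      fun h => (Set.disjoint_left.mp (hfg i₀ j) hu₀ h).elim
  have hvg : v ∈ g j := hv.resolve_left (index_eq hu ▸ hv₀)
  have hvg' : v ∈ g j' := hv'.resolve_left (index_eq hu' ▸ hv₀)
  rw [index_eq hu, index_eq hu', eq_of_mem_of_pairwise_disjoint hg hvg hvg']

theorem subsingleton_of_separated (hf : Pairwise (Disjoint on f))
    (hg : Pairwise (Disjoint on g)) (hfg : ∀ i j, Disjoint (f i) (g j))
    (hsep : ∃ h ∈ range fun p : ι × κ => f p.1 ∪ g p.2, u ∈ h ∧ v ∉ h) :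
    {h ∈ range fun p : ι × κ => f p.1 ∪ g p.2 | u ∈ h ∧ v ∈ h}.Subsingleton := by
  rintro _ ⟨⟨⟨i, j⟩, rfl⟩, hu, hv⟩ _ ⟨⟨⟨i', j'⟩, rfl⟩, hu', hv'⟩
  obtain ⟨_, ⟨⟨i₀, j₀⟩, rfl⟩, hu₀, hv₀⟩ := hsep
  simp only [mem_union, not_or] at hu₀ hv₀
  rcases hu₀ with hu₀ | hu₀
  · exact union_eq_union_of_mem_left hf hg hfg hu₀ hv₀.1 hu hv hu' hv'
  · simpa only [union_comm] using union_eq_union_of_mem_left hg hf (fun j i => (hfg i j).symm)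
      hu₀ hv₀.2 (union_comm (f i) _ ▸ hu) (union_comm (f i) _ ▸ hv)
      (union_comm (f i') _ ▸ hu') (union_comm (f i') _ ▸ hv')

end DisjointUnions

section Generation

variable {X : Type*} {H : Set (Set X)}

theorem exists_stream_seenSet_eq {C : Set X} (hC : 0 < C.ncard) :
    ∃ x : ℕ → X, (∀ i, x i ∈ C) ∧ (∀ t ≤ C.ncard, (seenSet x t).ncard = t) ∧
      seenSet x C.ncard = C := by
  have : Finite C := (Set.finite_of_ncard_pos hC).to_subtype
  set n := C.ncard
  let e : Fin n ≃ C := (Finite.equivFinOfCardEq (Nat.card_coe_set_eq C)).symm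
  let x : ℕ → X := fun i => e ⟨i % n, Nat.mod_lt i hC⟩
  have hx {i} (hi : i < n) : x i = e ⟨i, hi⟩ := by simp only [x, Nat.mod_eq_of_lt hi]
  refine ⟨x, fun i => (e _).2, fun t ht => ?_, ?_⟩
  · have hinj : InjOn x (Iio t) := fun i hi j hj hij => by
      rw [hx (lt_of_lt_of_le hi ht), hx (lt_of_lt_of_le hj ht)] at hij
      simpa using e.injective (Subtype.ext hij)
    exact hinj.ncard_image.trans (ncard_Iio_nat t)
  · refine (image_subset_iff.mpr fun i _ => (e _).2).antisymm fun z hz => ?_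
    refine ⟨e.symm ⟨z, hz⟩, (e.symm ⟨z, hz⟩).2, ?_⟩
    change x _ = z
    simp [hx (e.symm ⟨z, hz⟩).2]

theorem not_uniformlyGeneratable_of_closureDimInf (hH : ClosureDimInf H) :
    ¬ UniformlyGeneratable H := by
  rintro ⟨G, d, hG⟩
  -- `d + 1` rather than `d`, so that the closure is also nonempty
  obtain ⟨d', hdd', S, rfl, ⟨h₀, hh₀⟩, hfin⟩ := hH (d + 1)
  set C := hclosure H S
  have hSC : (S : Set X) ⊆ C := subset_sInter fun h hh => hh.2
  have hdC : d + 1 ≤ C.ncard := (ncard_coe_finset S ▸ hdd').trans (ncard_le_ncard hSC hfin)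
  obtain ⟨x, hxC, hcard, hseen⟩ := exists_stream_seenSet_eq (C := C) (by omega)
  have hok : ∀ h ∈ versionSpace H S, GenOK G h x C.ncard := fun h hh =>
    hG h hh.1 x (fun i => hxC i h hh) d (hcard d (by omega)) _ (by omega)
  refine (hok h₀ hh₀).2 ?_
  rw [hseen]
  exact fun h hh => (hok h hh).1

end Generation

def blockStart (d : ℕ) : ℤ := (d : ℤ) * ((d : ℤ) - 1) / 2

theorem Ablock_eq_Icc (d : ℕ) : Ablock d = Icc (blockStart d + 1) (blockStart d + d) := rfl

theorem blockStart_succ (d : ℕ) : blockStart (d + 1) = blockStart d + d := by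
  rw [blockStart, blockStart, ← Int.add_mul_ediv_right _ _ two_ne_zero]
  push_cast
  ring_nf

theorem blockStart_mono : Monotone blockStart :=
  monotone_nat_of_le_succ fun d => by simp [blockStart_succ]

theorem pos_of_mem_Ablock {z : ℤ} {d : ℕ} (h : z ∈ Ablock d) : 0 < z := by
  have : 0 ≤ blockStart d := blockStart_mono d.zero_le
  rw [Ablock_eq_Icc] at h
  linarith [h.1]

theorem pairwise_disjoint_Ablock : Pairwise (Disjoint on Ablock) := by
  refine (pairwise_disjoint_on Ablock).mpr fun d d' hdd' => Set.disjoint_left.mpr ?_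
  have := blockStart_succ d ▸ blockStart_mono (Nat.succ_le_of_lt hdd')
  intro z hz hz'
  rw [Ablock_eq_Icc] at hz hz'
  linarith [hz.2, hz'.1]

theorem disjoint_Eneg_Oneg : Disjoint Eneg Oneg :=
  Set.disjoint_left.mpr fun _ he ho => Int.not_odd_iff_even.mpr he.2 ho.2

def negParity (b : Bool) : Set ℤ := cond b Eneg Oneg

theorem neg_of_mem_negParity {z : ℤ} {b : Bool} (h : z ∈ negParity b) : z < 0 := by
  cases b
  exacts [h.1, h.1]

theorem disjoint_Ablock_negParity (d : ℕ) (b : Bool) : Disjoint (Ablock d) (negParity b) :=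
  Set.disjoint_left.mpr fun _ ha hb =>
    (pos_of_mem_Ablock ha).not_gt (neg_of_mem_negParity hb)

theorem union_negParity_mem_Hblocks {d : ℕ} (hd : 1 ≤ d) (b : Bool) :
    Ablock d ∪ negParity b ∈ Hblocks := by
  cases b
  exacts [Or.inr ⟨d, hd, rfl⟩, Or.inl ⟨d, hd, rfl⟩]

theorem Hblocks_subset_range :
    Hblocks ⊆ range fun p : ℕ × Bool => Ablock p.1 ∪ negParity p.2 := by
  rintro _ (⟨d, -, rfl⟩ | ⟨d, -, rfl⟩)
  exacts [⟨(d, true), rfl⟩, ⟨(d, false), rfl⟩]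

theorem lShattered_two_Hblocks : LShattered Hblocks 2 := by
  refine lShattered_two_of_forall_bool (a := -2) (b := 1) fun p q =>
    ⟨_, union_negParity_mem_Hblocks (d := if q then 1 else 2) (by split <;> norm_num) p, ?_⟩
  cases p <;> cases q <;> norm_num [Ablock, negParity, Eneg, Oneg, Int.even_iff, Int.odd_iff]

theorem not_lShattered_three_Hblocks : ¬ LShattered Hblocks 3 := fun h =>
  not_lShattered_three_of_subsingleton
    (fun _ _ => subsingleton_of_separated pairwise_disjoint_Ablock
      (pairwise_disjoint_on_bool.mpr disjoint_Eneg_Oneg) disjoint_Ablock_negParity)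
    (h.mono Hblocks_subset_range)

theorem closureDimInf_Hblocks : ClosureDimInf Hblocks := by
  intro n
  obtain ⟨D, hnD, hD⟩ : ∃ D, n ≤ D ∧ 1 ≤ D := ⟨max n 1, le_max_left _ _, le_max_right _ _⟩
  have hS : (↑(Finset.Icc (blockStart D + 1) (blockStart D + D)) : Set ℤ) = Ablock D := by
    rw [Finset.coe_Icc, Ablock_eq_Icc]
  have he : Ablock D ∪ Eneg ∈ versionSpace Hblocks (Ablock D) :=
    ⟨Or.inl ⟨D, hD, rfl⟩, subset_union_left⟩
  have ho : Ablock D ∪ Oneg ∈ versionSpace Hblocks (Ablock D) :=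
    ⟨Or.inr ⟨D, hD, rfl⟩, subset_union_left⟩
  have hcl : hclosure Hblocks (Ablock D) ⊆ Ablock D := by
    refine (subset_inter (sInter_subset_of_mem he) (sInter_subset_of_mem ho)).trans ?_
    rw [← union_inter_distrib_left, disjoint_Eneg_Oneg.inter_eq, union_empty]
  refine ⟨D, hnD, _, ?_, hS ▸ ⟨_, he⟩, hS ▸ (finite_Icc _ _).subset hcl⟩
  rw [Int.card_Icc]
  omega

/-- the Littlestone dimension of `Hblocks` equals 2 (a depth-2
Littlestone tree is shattered but no depth-3 tree is), so it is online
learnable; yet its Closure dimension is infinite, so it is not uniformly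
generatable. -/
theorem stmt17 :
    LShattered Hblocks 2 ∧ ¬ LShattered Hblocks 3 ∧
    ClosureDimInf Hblocks ∧ ¬ UniformlyGeneratable Hblocks :=
  ⟨lShattered_two_Hblocks, not_lShattered_three_Hblocks, closureDimInf_Hblocks,
    not_uniformlyGeneratable_of_closureDimInf closureDimInf_Hblocks⟩
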